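/- arXiv:1806.05896 — 10 statements merged into one kernel-verified Lean document; each statement's English description precedes it below -/
import Mathlib

section
/- Let M be a symmetric positive definite n×n real matrix, and let D and Θ be n×n diagonal matrices with strictly positive diagonal entries. Then every eigenvalue λ of the matrix (D + Θ)⁻¹ (M + Θ) is real and satisfies min{λmin(D⁻¹M), 1} ≤ λ ≤ max{λmax(D⁻¹M), 1}. -/
/-!
Multiplying by `D + Θ` turns the eigen-equation into the pencil `(M + Θ) v = μ (D + Θ) v`, whose
left side is symmetric and right side positive definite, so `μ = v*(M + Θ)v / v*(D + Θ)v` is real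
and, as `det (M + Θ - μ (D + Θ)) = 0` is a condition on a real matrix, the pencil has a real
eigenvector `w` for it. Then
`μ = (wᵀMw + wᵀΘw) / (wᵀDw + wᵀΘw)` is the mediant of the Rayleigh quotient `wᵀMw / wᵀDw` and of
`wᵀΘw / wᵀΘw = 1`, hence lies between them.
-/

open Matrix

/-- The set of Rayleigh quotients `(vᵀ P v)/(vᵀ Q v)` over nonzero real vectors `v`.
For `P = M` symmetric positive definite and `Q = D` diagonal positive definite,
`sInf` (resp. `sSup`) of this set is `λmin(D⁻¹M)` (resp. `λmax(D⁻¹M)`). -/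
def rayleighSet {n : ℕ} (P Q : Matrix (Fin n) (Fin n) ℝ) : Set ℝ :=
  {r | ∃ v : Fin n → ℝ, v ≠ 0 ∧ r = (v ⬝ᵥ (P *ᵥ v)) / (v ⬝ᵥ (Q *ᵥ v))}

section Mediant

variable {α : Type*} [Field α] [LinearOrder α] [IsStrictOrderedRing α] {a b c d : α}

theorem min_div_le_add_div_add (hb : 0 < b) (hd : 0 < d) :
    min (a / b) (c / d) ≤ (a + c) / (b + d) := by
  have ha : min (a / b) (c / d) * b ≤ a := (le_div_iff₀ hb).mp (min_le_left _ _)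
  have hc : min (a / b) (c / d) * d ≤ c := (le_div_iff₀ hd).mp (min_le_right _ _)
  rw [le_div_iff₀ (add_pos hb hd), mul_add]
  linarith

theorem add_div_add_le_max_div (hb : 0 < b) (hd : 0 < d) :
    (a + c) / (b + d) ≤ max (a / b) (c / d) := by
  have ha : a ≤ max (a / b) (c / d) * b := (div_le_iff₀ hb).mp (le_max_left _ _)
  have hc : c ≤ max (a / b) (c / d) * d := (div_le_iff₀ hd).mp (le_max_right _ _)
  rw [div_le_iff₀ (add_pos hb hd), mul_add]
  linarith

end Mediant

namespace Matrix

open scoped ComplexOrder in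
theorem posDef_diagonal_map_ofReal {ι : Type*} [DecidableEq ι] {d : ι → ℝ} (hd : ∀ i, 0 < d i) :
    ((diagonal d).map Complex.ofReal).PosDef := by
  rw [diagonal_map Complex.ofReal_zero]
  exact PosDef.diagonal fun i => Complex.zero_lt_real.mpr (hd i)

variable {ι : Type*} [Fintype ι]

theorem map_mulVec_eq_smul_map_mulVec_of_nonsing_inv_mul [DecidableEq ι] {K L : Type*}
    [CommRing K] [CommRing L] (f : K →+* L) {A C : Matrix ι ι K} (hC : IsUnit C.det)
    {μ : L} {v : ι → L} (h : (C⁻¹ * A).map f *ᵥ v = μ • v) :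
    A.map f *ᵥ v = μ • C.map f *ᵥ v := by
  calc A.map f *ᵥ v = (C * (C⁻¹ * A)).map f *ᵥ v := by rw [mul_nonsing_inv_cancel_left _ _ hC]
    _ = C.map f *ᵥ ((C⁻¹ * A).map f *ᵥ v) := by rw [Matrix.map_mul, mulVec_mulVec]
    _ = μ • C.map f *ᵥ v := by rw [h, mulVec_smul]

open scoped ComplexOrder in
theorem im_eq_zero_of_mulVec_eq_smul_mulVec {𝕜 : Type*} [RCLike 𝕜] {A C : Matrix ι ι 𝕜}
    (hA : A.IsHermitian) (hC : C.PosDef) {μ : 𝕜} {v : ι → 𝕜} (hv : v ≠ 0)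
    (h : A *ᵥ v = μ • C *ᵥ v) : RCLike.im μ = 0 := by
  have hs := hC.dotProduct_mulVec_pos hv
  have hquad : star v ⬝ᵥ A *ᵥ v = μ * (star v ⬝ᵥ C *ᵥ v) := by
    rw [h, dotProduct_smul, smul_eq_mul]
  have him := hA.im_star_dotProduct_mulVec_self v
  rw [hquad, RCLike.mul_im, (RCLike.pos_iff.mp hs).2, mul_zero, zero_add] at him
  exact (mul_eq_zero.mp him).resolve_right (RCLike.pos_iff.mp hs).1.ne'

theorem exists_ne_zero_mulVec_eq_smul_mulVec_of_map [DecidableEq ι] {K L : Type*} [Field K]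
    [CommRing L] [IsDomain L] (f : K →+* L) {A C : Matrix ι ι K} {r : K} {v : ι → L}
    (hv : v ≠ 0) (h : A.map f *ᵥ v = f r • C.map f *ᵥ v) :
    ∃ w ≠ 0, A *ᵥ w = r • C *ᵥ w := by
  have hker : (A - r • C).map f *ᵥ v = 0 := by
    rw [Matrix.map_sub f (map_sub f), map_smul' f r C (map_mul f), sub_mulVec, smul_mulVec, h,
      sub_self]
  have hdet : (A - r • C).det = 0 := by
    rw [← map_eq_zero_iff f f.injective, RingHom.map_det]
    exact exists_mulVec_eq_zero_iff.mp ⟨v, hv, hker⟩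
  obtain ⟨w, hw, hAw⟩ := exists_mulVec_eq_zero_iff.mpr hdet
  exact ⟨w, hw, by rwa [sub_mulVec, smul_mulVec, sub_eq_zero] at hAw⟩

end Matrix

theorem rayleighSet_subset_image_sphere {n : ℕ} (P Q : Matrix (Fin n) (Fin n) ℝ) :
    rayleighSet P Q ⊆
      (fun u => (u ⬝ᵥ (P *ᵥ u)) / (u ⬝ᵥ (Q *ᵥ u))) '' Metric.sphere 0 1 := by
  rintro _ ⟨w, hw, rfl⟩
  refine ⟨‖w‖⁻¹ • w, by simpa using norm_smul_inv_norm (𝕜 := ℝ) hw, ?_⟩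
  have hc : ‖w‖⁻¹ * ‖w‖⁻¹ ≠ 0 := by positivity
  simp only [mulVec_smul, dotProduct_smul, smul_dotProduct, smul_eq_mul, ← mul_assoc]
  exact mul_div_mul_left _ _ hc

-- Without boundedness, `sInf` and `sSup` of the set would be the junk value `0`.
theorem isBounded_rayleighSet {n : ℕ} (P : Matrix (Fin n) (Fin n) ℝ)
    {Q : Matrix (Fin n) (Fin n) ℝ} (hQ : Q.PosDef) :
    Bornology.IsBounded (rayleighSet P Q) := by
  refine (IsCompact.isBounded ?_).subset (rayleighSet_subset_image_sphere P Q)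
  refine (isCompact_sphere 0 1).image_of_continuousOn (ContinuousOn.div ?_ ?_ ?_)
  · fun_prop
  · fun_prop
  · intro u hu
    simpa using (hQ.dotProduct_mulVec_pos (ne_zero_of_mem_unit_sphere ⟨u, hu⟩)).ne'

theorem mem_Icc_of_add_diagonal_mulVec_eq_smul {n : ℕ} (M : Matrix (Fin n) (Fin n) ℝ)
    {d θ : Fin n → ℝ} (hd : ∀ i, 0 < d i) (hθ : ∀ i, 0 < θ i) {r : ℝ} {w : Fin n → ℝ}
    (hw : w ≠ 0) (h : (M + diagonal θ) *ᵥ w = r • (diagonal d + diagonal θ) *ᵥ w) :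
    r ∈ Set.Icc (min (sInf (rayleighSet M (diagonal d))) 1)
      (max (sSup (rayleighSet M (diagonal d))) 1) := by
  set a := w ⬝ᵥ (M *ᵥ w)
  set b := w ⬝ᵥ (diagonal d *ᵥ w)
  set e := w ⬝ᵥ (diagonal θ *ᵥ w)
  have hb : 0 < b := by simpa using (PosDef.diagonal hd).dotProduct_mulVec_pos hw
  have he : 0 < e := by simpa using (PosDef.diagonal hθ).dotProduct_mulVec_pos hw
  have hr : r = (a + e) / (b + e) := by
    have hquad := congrArg (w ⬝ᵥ ·) h
    simp only [add_mulVec, dotProduct_add, dotProduct_smul, smul_eq_mul] at hquad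
    rw [eq_div_iff (by positivity), hquad]
  have hmem : a / b ∈ rayleighSet M (diagonal d) := ⟨w, hw, rfl⟩
  have hbdd := isBounded_rayleighSet M (PosDef.diagonal hd)
  rw [← div_self he.ne']
  constructor
  · calc min (sInf (rayleighSet M (diagonal d))) (e / e) ≤ min (a / b) (e / e) :=
          min_le_min_right _ (csInf_le hbdd.bddBelow hmem)
      _ ≤ r := hr ▸ min_div_le_add_div_add hb he
  · calc r ≤ max (a / b) (e / e) := hr ▸ add_div_add_le_max_div hb he
      _ ≤ max (sSup (rayleighSet M (diagonal d))) (e / e) :=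
          max_le_max_right _ (le_csSup hbdd.bddAbove hmem)

/-- Every eigenvalue `μ` of `(D + Θ)⁻¹ (M + Θ)` is real and lies in
`[min{λmin(D⁻¹M), 1}, max{λmax(D⁻¹M), 1}]`. -/
theorem eig_bound_diag_plus_theta {n : ℕ}
    (M : Matrix (Fin n) (Fin n) ℝ) (hM : M.PosDef)
    (d θ : Fin n → ℝ) (hd : ∀ i, 0 < d i) (hθ : ∀ i, 0 < θ i)
    (μ : ℂ) (v : Fin n → ℂ) (hv : v ≠ 0)
    (heig : (((Matrix.diagonal d + Matrix.diagonal θ)⁻¹ *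
        (M + Matrix.diagonal θ)).map Complex.ofReal) *ᵥ v = μ • v) :
    μ.im = 0 ∧
      min (sInf (rayleighSet M (Matrix.diagonal d))) 1 ≤ μ.re ∧
      μ.re ≤ max (sSup (rayleighSet M (Matrix.diagonal d))) 1 := by
  have hC : (diagonal d + diagonal θ).PosDef := (PosDef.diagonal hd).add (PosDef.diagonal hθ)
  have hpencil := map_mulVec_eq_smul_map_mulVec_of_nonsing_inv_mul Complex.ofRealHom
    hC.det_pos.ne'.isUnit heig
  have hCℂ := diagonal_add d θ ▸ posDef_diagonal_map_ofReal fun i => add_pos (hd i) (hθ i)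
  have him : μ.im = 0 := im_eq_zero_of_mulVec_eq_smul_mulVec
    ((hM.1.add (isHermitian_diagonal θ)).map _ fun x => (Complex.conj_ofReal x).symm)
    hCℂ hv hpencil
  rw [← Complex.re_add_im μ, him, Complex.ofReal_zero, zero_mul, add_zero] at hpencil
  obtain ⟨w, hw, hAw⟩ := exists_ne_zero_mulVec_eq_smul_mulVec_of_map Complex.ofRealHom hv hpencil
  obtain ⟨hlow, hupp⟩ := mem_Icc_of_add_diagonal_mulVec_eq_smul M hd hθ hw hAw
  exact ⟨him, hlow, hupp⟩
end

section
/- Let M be a symmetric positive definite n×n real matrix, let D be an n×n diagonal matrix with strictly positive diagonal entries, let α > 0, and let Θ_w and Θ_v be n×n diagonal matrices with strictly positive diagonal entries. Then every eigenvalue λ of the 2n×2n matrix [[α D + Θ_w, −α D], [−α D, α D + Θ_v]]⁻¹ [[α M + Θ_w, −α M], [−α M, α M + Θ_v]] is real and satisfies min{λmin(D⁻¹M), 1} ≤ λ ≤ max{λmax(D⁻¹M), 1}. -/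
open Matrix

/-!
The quadratic form of `[[αS + W, -αS], [-αS, αS + V]]` at `(x, y)` is
`α (x - y)ᵀ S (x - y) + xᵀ W x + yᵀ V y`. Since the `W`, `V` terms do not involve `S`, the
bounds `λmin zᵀDz ≤ zᵀMz ≤ λmax zᵀDz` pass to the two block matrices once the constants are
truncated at `1`. An eigenpair of `A⁻¹B` with `A`, `B` real symmetric and `A` positive definite
satisfies `Bv = μ Av`, so `μ = v*Bv / v*Av` is a quotient of real quadratic forms (in the real and
imaginary parts of `v`), and therefore real and squeezed between those constants.
-/

namespace Matrix

variable {ι : Type*}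

section

variable [Fintype ι]

lemma IsSymm.dotProduct_mulVec_comm {S : Matrix ι ι ℝ} (hS : S.IsSymm) (x y : ι → ℝ) :
    x ⬝ᵥ (S *ᵥ y) = y ⬝ᵥ (S *ᵥ x) := by
  rw [dotProduct_mulVec, ← vecMul_transpose, hS.eq, dotProduct_comm]

lemma PosSemidef.dotProduct_mulVec_self_nonneg {S : Matrix ι ι ℝ} (hS : S.PosSemidef)
    (x : ι → ℝ) : 0 ≤ x ⬝ᵥ (S *ᵥ x) :=
  hS.dotProduct_mulVec_nonneg x

lemma PosDef.dotProduct_mulVec_self_pos {S : Matrix ι ι ℝ} (hS : S.PosDef) {x : ι → ℝ}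
    (hx : x ≠ 0) : 0 < x ⬝ᵥ (S *ᵥ x) :=
  hS.dotProduct_mulVec_pos hx

lemma star_dotProduct_map_ofReal_mulVec {S : Matrix ι ι ℝ} (hS : S.IsSymm) (v : ι → ℂ) :
    star v ⬝ᵥ (S.map Complex.ofReal *ᵥ v) =
      ((Complex.re ∘ v) ⬝ᵥ (S *ᵥ (Complex.re ∘ v)) + (Complex.im ∘ v) ⬝ᵥ (S *ᵥ (Complex.im ∘ v))
        : ℝ) := by
  have hsymm := hS.dotProduct_mulVec_comm (Complex.re ∘ v) (Complex.im ∘ v)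
  apply Complex.ext
  · simp [dotProduct, mulVec, Complex.mul_re, Finset.mul_sum, Finset.sum_add_distrib]
  · simp [dotProduct, mulVec, Complex.mul_im, Finset.mul_sum] at hsymm ⊢
    simp only [← sub_eq_add_neg, Finset.sum_sub_distrib, hsymm, sub_self]

lemma PosDef.dotProduct_re_add_im_pos {A : Matrix ι ι ℝ} (hA : A.PosDef) {v : ι → ℂ}
    (hv : v ≠ 0) :
    0 < (Complex.re ∘ v) ⬝ᵥ (A *ᵥ (Complex.re ∘ v)) +
      (Complex.im ∘ v) ⬝ᵥ (A *ᵥ (Complex.im ∘ v)) := by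
  have hx := hA.posSemidef.dotProduct_mulVec_self_nonneg (Complex.re ∘ v)
  have hy := hA.posSemidef.dotProduct_mulVec_self_nonneg (Complex.im ∘ v)
  by_cases hre : Complex.re ∘ v = 0
  · have him : Complex.im ∘ v ≠ 0 := fun him ↦
      hv (funext fun i ↦ Complex.ext (congrFun hre i) (congrFun him i))
    linarith [hA.dotProduct_mulVec_self_pos him]
  · linarith [hA.dotProduct_mulVec_self_pos hre]

lemma map_ofReal_mulVec_eq_smul_of_inv_mul [DecidableEq ι] {A B : Matrix ι ι ℝ}
    (hA : IsUnit A.det) {μ : ℂ} {v : ι → ℂ}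
    (h : (A⁻¹ * B).map Complex.ofReal *ᵥ v = μ • v) :
    B.map Complex.ofReal *ᵥ v = μ • (A.map Complex.ofReal *ᵥ v) := by
  calc B.map Complex.ofReal *ᵥ v = (A * (A⁻¹ * B)).map Complex.ofReal *ᵥ v := by
        rw [mul_nonsing_inv_cancel_left A B hA]
    _ = A.map Complex.ofReal *ᵥ ((A⁻¹ * B).map Complex.ofReal *ᵥ v) := by
        rw [mulVec_mulVec]
        exact congrArg (· *ᵥ v) (Matrix.map_mul (f := Complex.ofRealHom))
    _ = μ • (A.map Complex.ofReal *ᵥ v) := by rw [h, mulVec_smul]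

lemma eq_ofReal_div_of_mulVec_eq_smul_mulVec {A B : Matrix ι ι ℝ} (hA : A.PosDef)
    (hB : B.IsSymm) {μ : ℂ} {v : ι → ℂ} (hv : v ≠ 0)
    (h : B.map Complex.ofReal *ᵥ v = μ • (A.map Complex.ofReal *ᵥ v)) :
    μ = (((Complex.re ∘ v) ⬝ᵥ (B *ᵥ (Complex.re ∘ v)) +
          (Complex.im ∘ v) ⬝ᵥ (B *ᵥ (Complex.im ∘ v))) /
        ((Complex.re ∘ v) ⬝ᵥ (A *ᵥ (Complex.re ∘ v)) +
          (Complex.im ∘ v) ⬝ᵥ (A *ᵥ (Complex.im ∘ v))) : ℝ) := by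
  have hform := congrArg (star v ⬝ᵥ ·) h
  simp only [dotProduct_smul, smul_eq_mul, star_dotProduct_map_ofReal_mulVec hB,
    star_dotProduct_map_ofReal_mulVec (isHermitian_iff_isSymm.mp hA.1)] at hform
  rw [Complex.ofReal_div, eq_div_iff (by exact_mod_cast (hA.dotProduct_re_add_im_pos hv).ne')]
  exact hform.symm

theorem im_eq_zero_and_le_re_le_of_inv_mul_mulVec_eq_smul [DecidableEq ι] {A B : Matrix ι ι ℝ}
    (hA : A.PosDef) (hB : B.IsSymm) {c C : ℝ}
    (hc : ∀ u, c * (u ⬝ᵥ (A *ᵥ u)) ≤ u ⬝ᵥ (B *ᵥ u))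
    (hC : ∀ u, u ⬝ᵥ (B *ᵥ u) ≤ C * (u ⬝ᵥ (A *ᵥ u)))
    {μ : ℂ} {v : ι → ℂ} (hv : v ≠ 0) (h : (A⁻¹ * B).map Complex.ofReal *ᵥ v = μ • v) :
    μ.im = 0 ∧ c ≤ μ.re ∧ μ.re ≤ C := by
  have hpos := hA.dotProduct_re_add_im_pos hv
  rw [eq_ofReal_div_of_mulVec_eq_smul_mulVec hA hB hv
    (map_ofReal_mulVec_eq_smul_of_inv_mul hA.det_pos.ne'.isUnit h), Complex.ofReal_im,
    Complex.ofReal_re, le_div_iff₀ hpos, div_le_iff₀ hpos]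
  refine ⟨rfl, ?_, ?_⟩
  · linarith [hc (Complex.re ∘ v), hc (Complex.im ∘ v)]
  · linarith [hC (Complex.re ∘ v), hC (Complex.im ∘ v)]

end

-- With `S = M`, resp. `S = D`, and `W = Θ_w`, `V = Θ_v`, this is the system matrix,
-- resp. the preconditioner, of the theorem.
def couplingMatrix (α : ℝ) (S W V : Matrix ι ι ℝ) : Matrix (ι ⊕ ι) (ι ⊕ ι) ℝ :=
  fromBlocks (α • S + W) (-(α • S)) (-(α • S)) (α • S + V)

section couplingMatrix

variable {α : ℝ} {S T W V : Matrix ι ι ℝ}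

lemma IsSymm.couplingMatrix (hS : S.IsSymm) (hW : W.IsSymm) (hV : V.IsSymm) :
    (couplingMatrix α S W V).IsSymm :=
  .fromBlocks ((hS.smul α).add hW) (by rw [transpose_neg, (hS.smul α).eq]) ((hS.smul α).add hV)

variable [Fintype ι]

lemma dotProduct_couplingMatrix_mulVec (hS : S.IsSymm) (u : ι ⊕ ι → ℝ) :
    u ⬝ᵥ (couplingMatrix α S W V *ᵥ u) =
      α * ((u ∘ Sum.inl - u ∘ Sum.inr) ⬝ᵥ (S *ᵥ (u ∘ Sum.inl - u ∘ Sum.inr))) +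
        (u ∘ Sum.inl) ⬝ᵥ (W *ᵥ (u ∘ Sum.inl)) + (u ∘ Sum.inr) ⬝ᵥ (V *ᵥ (u ∘ Sum.inr)) := by
  conv_lhs => rw [← Sum.elim_comp_inl_inr u]
  rw [couplingMatrix, fromBlocks_mulVec, sumElim_dotProduct_sumElim]
  simp only [add_mulVec, neg_mulVec, smul_mulVec, mulVec_sub, dotProduct_add, dotProduct_neg,
    dotProduct_smul, dotProduct_sub, sub_dotProduct, smul_eq_mul, Sum.elim_comp_inl,
    Sum.elim_comp_inr]
  rw [hS.dotProduct_mulVec_comm (u ∘ Sum.inr) (u ∘ Sum.inl)]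
  ring

lemma posDef_couplingMatrix (hα : 0 ≤ α) (hS : S.PosSemidef) (hW : W.PosDef) (hV : V.PosDef) :
    (couplingMatrix α S W V).PosDef := by
  have hSsymm := isHermitian_iff_isSymm.mp hS.1
  refine .of_dotProduct_mulVec_pos (isHermitian_iff_isSymm.mpr (hSsymm.couplingMatrix
    (isHermitian_iff_isSymm.mp hW.1) (isHermitian_iff_isSymm.mp hV.1))) fun u hu ↦ ?_
  rw [star_trivial, dotProduct_couplingMatrix_mulVec hSsymm]
  have hdiff := mul_nonneg hα (hS.dotProduct_mulVec_self_nonneg (u ∘ Sum.inl - u ∘ Sum.inr))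
  have hw := hW.posSemidef.dotProduct_mulVec_self_nonneg (u ∘ Sum.inl)
  have hv := hV.posSemidef.dotProduct_mulVec_self_nonneg (u ∘ Sum.inr)
  by_cases hl : u ∘ Sum.inl = 0
  · have hr : u ∘ Sum.inr ≠ 0 := fun hr ↦
      hu (by rw [← Sum.elim_comp_inl_inr u, hl, hr, Sum.elim_zero_zero])
    linarith [hV.dotProduct_mulVec_self_pos hr]
  · linarith [hW.dotProduct_mulVec_self_pos hl]

lemma min_mul_dotProduct_couplingMatrix_mulVec_le (hα : 0 ≤ α) (hS : S.IsSymm)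
    (hT : T.PosSemidef) (hW : W.PosSemidef) (hV : V.PosSemidef) {c : ℝ}
    (hc : ∀ z, c * (z ⬝ᵥ (T *ᵥ z)) ≤ z ⬝ᵥ (S *ᵥ z)) (u : ι ⊕ ι → ℝ) :
    min c 1 * (u ⬝ᵥ (couplingMatrix α T W V *ᵥ u)) ≤ u ⬝ᵥ (couplingMatrix α S W V *ᵥ u) := by
  rw [dotProduct_couplingMatrix_mulVec hS, dotProduct_couplingMatrix_mulVec
    (isHermitian_iff_isSymm.mp hT.1)]
  set z := u ∘ Sum.inl - u ∘ Sum.inr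
  have hz : min c 1 * (z ⬝ᵥ (T *ᵥ z)) ≤ z ⬝ᵥ (S *ᵥ z) :=
    (mul_le_mul_of_nonneg_right (min_le_left c 1) (hT.dotProduct_mulVec_self_nonneg z)).trans
      (hc z)
  have hw := mul_le_of_le_one_left (hW.dotProduct_mulVec_self_nonneg (u ∘ Sum.inl))
    (min_le_right c 1)
  have hv := mul_le_of_le_one_left (hV.dotProduct_mulVec_self_nonneg (u ∘ Sum.inr))
    (min_le_right c 1)
  nlinarith [mul_le_mul_of_nonneg_left hz hα]

lemma dotProduct_couplingMatrix_mulVec_le_max_mul (hα : 0 ≤ α) (hS : S.IsSymm)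
    (hT : T.PosSemidef) (hW : W.PosSemidef) (hV : V.PosSemidef) {C : ℝ}
    (hC : ∀ z, z ⬝ᵥ (S *ᵥ z) ≤ C * (z ⬝ᵥ (T *ᵥ z))) (u : ι ⊕ ι → ℝ) :
    u ⬝ᵥ (couplingMatrix α S W V *ᵥ u) ≤ max C 1 * (u ⬝ᵥ (couplingMatrix α T W V *ᵥ u)) := by
  rw [dotProduct_couplingMatrix_mulVec hS, dotProduct_couplingMatrix_mulVec
    (isHermitian_iff_isSymm.mp hT.1)]
  set z := u ∘ Sum.inl - u ∘ Sum.inr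
  have hz : z ⬝ᵥ (S *ᵥ z) ≤ max C 1 * (z ⬝ᵥ (T *ᵥ z)) :=
    (hC z).trans
      (mul_le_mul_of_nonneg_right (le_max_left C 1) (hT.dotProduct_mulVec_self_nonneg z))
  have hw := le_mul_of_one_le_left (hW.dotProduct_mulVec_self_nonneg (u ∘ Sum.inl))
    (le_max_right C 1)
  have hv := le_mul_of_one_le_left (hV.dotProduct_mulVec_self_nonneg (u ∘ Sum.inr))
    (le_max_right C 1)
  nlinarith [mul_le_mul_of_nonneg_left hz hα]

end couplingMatrix

section rayleighSet

variable {n : ℕ} (P : Matrix (Fin n) (Fin n) ℝ) {Q : Matrix (Fin n) (Fin n) ℝ}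

-- The quotient is invariant under scaling, so the set is an image of the compact unit sphere.
lemma isBounded_rayleighSet (hQ : Q.PosDef) : Bornology.IsBounded (rayleighSet P Q) := by
  set f : (Fin n → ℝ) → ℝ := fun v ↦ (v ⬝ᵥ (P *ᵥ v)) / (v ⬝ᵥ (Q *ᵥ v))
  have hsub : rayleighSet P Q ⊆ f '' Metric.sphere 0 1 := by
    rintro _ ⟨v, hv, rfl⟩
    have hn : ‖v‖ ≠ 0 := norm_ne_zero_iff.mpr hv
    have hc : ‖v‖⁻¹ ≠ 0 := inv_ne_zero hn
    refine ⟨‖v‖⁻¹ • v, mem_sphere_zero_iff_norm.mpr ?_, ?_⟩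
    · rw [norm_smul, norm_inv, norm_norm, inv_mul_cancel₀ hn]
    · simp only [f, mulVec_smul, dotProduct_smul, smul_dotProduct, smul_eq_mul]
      rw [mul_div_mul_left _ _ hc, mul_div_mul_left _ _ hc]
  refine ((isCompact_sphere 0 1).image_of_continuousOn ?_).isBounded.subset hsub
  refine ContinuousOn.div (by fun_prop) (by fun_prop) fun v hv ↦ ?_
  exact (hQ.dotProduct_mulVec_self_pos (Metric.ne_of_mem_sphere hv one_ne_zero)).ne'

lemma sInf_rayleighSet_mul_le (hQ : Q.PosDef) (z : Fin n → ℝ) :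
    sInf (rayleighSet P Q) * (z ⬝ᵥ (Q *ᵥ z)) ≤ z ⬝ᵥ (P *ᵥ z) := by
  rcases eq_or_ne z 0 with rfl | hz
  · simp
  exact (le_div_iff₀ (hQ.dotProduct_mulVec_self_pos hz)).mp
    (csInf_le (isBounded_rayleighSet P hQ).bddBelow ⟨z, hz, rfl⟩)

lemma dotProduct_mulVec_le_sSup_rayleighSet_mul (hQ : Q.PosDef) (z : Fin n → ℝ) :
    z ⬝ᵥ (P *ᵥ z) ≤ sSup (rayleighSet P Q) * (z ⬝ᵥ (Q *ᵥ z)) := by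
  rcases eq_or_ne z 0 with rfl | hz
  · simp
  exact (div_le_iff₀ (hQ.dotProduct_mulVec_self_pos hz)).mp
    (le_csSup (isBounded_rayleighSet P hQ).bddAbove ⟨z, hz, rfl⟩)

end rayleighSet

end Matrix

/-- Every eigenvalue `μ` of
`[[αD + Θ_w, -αD], [-αD, αD + Θ_v]]⁻¹ [[αM + Θ_w, -αM], [-αM, αM + Θ_v]]`
is real and lies in `[min{λmin(D⁻¹M), 1}, max{λmax(D⁻¹M), 1}]`. -/
theorem eig_bound_block_diag_precond {n : ℕ}
    (M : Matrix (Fin n) (Fin n) ℝ) (hM : M.PosDef)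
    (d : Fin n → ℝ) (hd : ∀ i, 0 < d i)
    (α : ℝ) (hα : 0 < α)
    (dw dv : Fin n → ℝ) (hdw : ∀ i, 0 < dw i) (hdv : ∀ i, 0 < dv i)
    (μ : ℂ) (v : (Fin n ⊕ Fin n) → ℂ) (hv : v ≠ 0)
    (heig : (((Matrix.fromBlocks (α • Matrix.diagonal d + Matrix.diagonal dw)
          (-(α • Matrix.diagonal d)) (-(α • Matrix.diagonal d))
          (α • Matrix.diagonal d + Matrix.diagonal dv))⁻¹ *
        (Matrix.fromBlocks (α • M + Matrix.diagonal dw) (-(α • M)) (-(α • M))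
          (α • M + Matrix.diagonal dv))).map Complex.ofReal) *ᵥ v = μ • v) :
    μ.im = 0 ∧
      min (sInf (rayleighSet M (Matrix.diagonal d))) 1 ≤ μ.re ∧
      μ.re ≤ max (sSup (rayleighSet M (Matrix.diagonal d))) 1 := by
  have hMsymm : M.IsSymm := isHermitian_iff_isSymm.mp hM.1
  have hD := posDef_diagonal_iff.mpr hd
  have hW := posDef_diagonal_iff.mpr hdw
  have hV := posDef_diagonal_iff.mpr hdv
  exact im_eq_zero_and_le_re_le_of_inv_mul_mulVec_eq_smul
    (posDef_couplingMatrix hα.le hD.posSemidef hW hV)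
    (hMsymm.couplingMatrix (isSymm_diagonal dw) (isSymm_diagonal dv))
    (min_mul_dotProduct_couplingMatrix_mulVec_le hα.le hMsymm hD.posSemidef hW.posSemidef
      hV.posSemidef (sInf_rayleighSet_mul_le M hD))
    (dotProduct_couplingMatrix_mulVec_le_max_mul hα.le hMsymm hD.posSemidef hW.posSemidef
      hV.posSemidef (dotProduct_mulVec_le_sSup_rayleighSet_mul M hD))
    hv heig
end

section
/- Let M be a symmetric positive definite n×n real matrix, let α > 0, and let Θ_w and Θ_v be n×n diagonal matrices with strictly positive diagonal entries. Then [−M M] · ([[α M + Θ_w, −α M], [−α M, α M + Θ_v]])⁻¹ · [−M; M] = (1/α) M − (1/α²) (Θ_w⁻¹ + Θ_v⁻¹ + (1/α) M⁻¹)⁻¹, where [−M M] is the n×2n block row matrix with blocks −M and M and [−M; M] is its transpose. -/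
open Matrix
open scoped ComplexOrder

/-!
The block matrix `B = [[αM + Θ_w, -αM], [-αM, αM + Θ_v]]` is the positive semidefinite coupling
`α [[M, -M], [-M, M]]` plus the positive definite `diag(Θ_w, Θ_v)`, so it is invertible and
`B⁻¹ [-M; M]` is the unique solution of `B [X; Y] = [-M; M]`. With
`T = Θ_w⁻¹ + Θ_v⁻¹ + α⁻¹ M⁻¹` and `Z = α⁻¹ T⁻¹`, the solution is `X = -Θ_w⁻¹ Z`, `Y = Θ_v⁻¹ Z`:
both block equations reduce to `αM (Θ_w⁻¹ + Θ_v⁻¹) Z + Z = M`, which is `M T T⁻¹ = M`.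
Hence `[-M  M] [X; Y] = M (Θ_w⁻¹ + Θ_v⁻¹) Z = α⁻¹ (M - Z)`.
-/

variable {m n : Type*} [Fintype m] [Fintype n]

def controlBlock {R : Type*} [Ring R] (α : R) (M Θw Θv : Matrix m m R) :
    Matrix (m ⊕ m) (m ⊕ m) R :=
  fromBlocks (α • M + Θw) (-(α • M)) (-(α • M)) (α • M + Θv)

theorem Matrix.PosDef.fromBlocks_zero {𝕜 : Type*} [RCLike 𝕜] [DecidableEq m] [DecidableEq n]
    {A : Matrix m m 𝕜} {D : Matrix n n 𝕜} (hA : A.PosDef) (hD : D.PosDef) :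
    (fromBlocks A 0 0 D).PosDef := by
  let _ : Invertible A := hA.isUnit.invertible
  have hpsd : (fromBlocks A 0 0 D).PosSemidef := by
    simpa using (hA.fromBlocks₁₁ (0 : Matrix m n 𝕜) D).mpr (by simpa using hD.posSemidef)
  exact hpsd.posDef_iff_isUnit.mpr (isUnit_fromBlocks_zero₂₁.mpr ⟨hA.isUnit, hD.isUnit⟩)

theorem Matrix.PosSemidef.fromBlocks_neg_self [DecidableEq m] {R : Type*} [CommRing R]
    [PartialOrder R] [StarRing R] [StarOrderedRing R] {A : Matrix m m R} (hA : A.PosSemidef) :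
    (fromBlocks A (-A) (-A) A).PosSemidef := by
  have := hA.mul_mul_conjTranspose_same (fromRows (1 : Matrix m m R) (-1 : Matrix m m R))
  rw [fromRows_mul, conjTranspose_fromRows_eq_fromCols_conjTranspose,
    fromRows_mul_fromCols] at this
  simpa using this

theorem posDef_controlBlock [DecidableEq m] {α : ℝ} (hα : 0 ≤ α) {M Θw Θv : Matrix m m ℝ}
    (hM : M.PosSemidef) (hw : Θw.PosDef) (hv : Θv.PosDef) :
    (controlBlock α M Θw Θv).PosDef := by
  have hsplit : controlBlock α M Θw Θv =
      fromBlocks (α • M) (-(α • M)) (-(α • M)) (α • M) + fromBlocks Θw 0 0 Θv := by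
    simp [controlBlock, fromBlocks_add]
  rw [hsplit]
  exact PosDef.posSemidef_add (hM.smul hα).fromBlocks_neg_self (hw.fromBlocks_zero hv)

theorem controlBlock_mul_fromRows {R : Type*} [CommRing R] {α : R}
    {M Θw Θv u v Z : Matrix m m R} (hu : Θw * u = Z) (hv : Θv * v = Z)
    (huv : α • M * (u + v) + Z = M) :
    controlBlock α M Θw Θv * fromRows (-u) v = fromRows (-M) M := by
  rw [controlBlock, fromBlocks_mul_fromRows]
  congr 1
  · calc (α • M + Θw) * -u + -(α • M) * v = -(α • M * (u + v) + Θw * u) := by noncomm_ring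
      _ = -M := by rw [hu, huv]
  · calc -(α • M) * -u + (α • M + Θv) * v = α • M * (u + v) + Θv * v := by noncomm_ring
      _ = M := by rw [hv, huv]

theorem fromCols_mul_inv_controlBlock_mul_fromRows [DecidableEq m] {K : Type*} [Field K]
    {α : K} (hα : α ≠ 0) {M Θw Θv : Matrix m m K} (hM : IsUnit M) (hw : IsUnit Θw)
    (hv : IsUnit Θv) (hT : IsUnit (Θw⁻¹ + Θv⁻¹ + α⁻¹ • M⁻¹))
    (hB : IsUnit (controlBlock α M Θw Θv)) :
    fromCols (-M) M * (controlBlock α M Θw Θv)⁻¹ * fromRows (-M) M =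
      α⁻¹ • M - (α ^ 2)⁻¹ • (Θw⁻¹ + Θv⁻¹ + α⁻¹ • M⁻¹)⁻¹ := by
  rw [isUnit_iff_isUnit_det] at hM hw hv hT hB
  set T := Θw⁻¹ + Θv⁻¹ + α⁻¹ • M⁻¹
  set Z := α⁻¹ • T⁻¹
  have hW : Θw⁻¹ + Θv⁻¹ = T - α⁻¹ • M⁻¹ := by simp [T]
  have huv : α • M * (Θw⁻¹ * Z + Θv⁻¹ * Z) + Z = M := by
    rw [← add_mul, hW]
    simp only [Z, mul_sub, sub_mul, Matrix.smul_mul, Matrix.mul_smul, smul_smul,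
      ← Matrix.mul_assoc, mul_nonsing_inv _ hM, mul_nonsing_inv_cancel_right _ _ hT,
      Matrix.one_mul, inv_mul_cancel₀ hα, inv_mul_cancel_right₀ hα, one_smul]
    abel
  have hsolve := controlBlock_mul_fromRows (mul_nonsing_inv_cancel_left Θw Z hw)
    (mul_nonsing_inv_cancel_left Θv Z hv) huv
  have hMuv : M * (Θw⁻¹ * Z + Θv⁻¹ * Z) = α⁻¹ • (M - Z) := by
    rw [← eq_sub_of_add_eq huv, Matrix.smul_mul, smul_smul, inv_mul_cancel₀ hα, one_smul]
  rw [Matrix.mul_assoc, ← hsolve, nonsing_inv_mul_cancel_left _ _ hB, fromCols_mul_fromRows,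
    neg_mul_neg, ← Matrix.mul_add, hMuv, smul_sub, smul_smul, ← mul_inv, ← sq]

/-- The Schur-complement contribution of the control block:
`[-M  M] [[αM + Θ_w, -αM], [-αM, αM + Θ_v]]⁻¹ [-M; M]
  = (1/α) M - (1/α²) (Θ_w⁻¹ + Θ_v⁻¹ + (1/α) M⁻¹)⁻¹`. -/
theorem control_schur_identity {n : ℕ}
    (M : Matrix (Fin n) (Fin n) ℝ) (hM : M.PosDef)
    (α : ℝ) (hα : 0 < α)
    (dw dv : Fin n → ℝ) (hdw : ∀ i, 0 < dw i) (hdv : ∀ i, 0 < dv i) :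
    Matrix.fromCols (-M) M *
        (Matrix.fromBlocks (α • M + Matrix.diagonal dw) (-(α • M)) (-(α • M))
          (α • M + Matrix.diagonal dv))⁻¹ *
        Matrix.fromRows (-M) M =
      α⁻¹ • M - (α ^ 2)⁻¹ •
        ((Matrix.diagonal dw)⁻¹ + (Matrix.diagonal dv)⁻¹ + α⁻¹ • M⁻¹)⁻¹ := by
  have hw : (diagonal dw).PosDef := PosDef.diagonal hdw
  have hv : (diagonal dv).PosDef := PosDef.diagonal hdv
  have hT : ((diagonal dw)⁻¹ + (diagonal dv)⁻¹ + α⁻¹ • M⁻¹).PosDef :=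
    (hw.inv.add hv.inv).add_posSemidef (hM.inv.smul (inv_pos.mpr hα)).posSemidef
  exact fromCols_mul_inv_controlBlock_mul_fromRows hα.ne' hM.isUnit hw.isUnit hv.isUnit
    hT.isUnit (posDef_controlBlock hα.le hM.posSemidef hw hv).isUnit
end

section
/- Let M be a symmetric positive definite n×n real matrix, let α > 0, and let Θ_w and Θ_v be n×n diagonal matrices with strictly positive diagonal entries. Then the matrix (1/α) M − (1/α²) (Θ_w⁻¹ + Θ_v⁻¹ + (1/α) M⁻¹)⁻¹ is symmetric positive definite. -/
/-!
With `A = α M` and `D = Θ_w⁻¹ + Θ_v⁻¹`, the matrix is `α⁻² (A - (D + A⁻¹)⁻¹)`. The Woodbury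
identity gives `(D + A⁻¹)⁻¹ = A - A (D⁻¹ + A)⁻¹ A`, so `A - (D + A⁻¹)⁻¹ = Aᴴ (D⁻¹ + A)⁻¹ A` is a
congruence transform of a positive definite matrix by an invertible one.
-/

open Matrix
open scoped ComplexOrder

namespace Matrix.PosDef

variable {n K : Type*} [Fintype n] [DecidableEq n] [RCLike K]

theorem sub_inv_add_inv {A D : Matrix n n K} (hA : A.PosDef) (hD : D.PosDef) :
    (A - (D + A⁻¹)⁻¹).PosDef := by
  have hAA : A⁻¹⁻¹ = A := nonsing_inv_nonsing_inv A ((isUnit_iff_isUnit_det A).mp hA.isUnit)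
  have woodbury : (D + A⁻¹)⁻¹ = A - A * (D⁻¹ + A)⁻¹ * A := by
    have h := add_mul_mul_inv_eq_sub A⁻¹ 1 D 1 hA.inv.isUnit hD.isUnit
      (by simpa only [Matrix.one_mul, Matrix.mul_one, hAA] using (hD.inv.add hA).isUnit)
    simpa only [Matrix.one_mul, Matrix.mul_one, hAA, add_comm] using h
  have hcongr :=
    (hD.inv.add hA).inv.conjTranspose_mul_mul_same (mulVec_injective_of_isUnit hA.isUnit)
  rw [hA.isHermitian.eq] at hcongr
  rwa [woodbury, sub_sub_cancel]

end Matrix.PosDef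

/-- The matrix `(1/α) M - (1/α²) (Θ_w⁻¹ + Θ_v⁻¹ + (1/α) M⁻¹)⁻¹` is symmetric positive
definite whenever `M` is symmetric positive definite, `α > 0`, and `Θ_w`, `Θ_v` are diagonal
with strictly positive diagonal entries. -/
theorem control_schur_term_posdef {n : ℕ}
    (M : Matrix (Fin n) (Fin n) ℝ) (hM : M.PosDef)
    (α : ℝ) (hα : 0 < α)
    (dw dv : Fin n → ℝ) (hdw : ∀ i, 0 < dw i) (hdv : ∀ i, 0 < dv i) :
    (α⁻¹ • M - (α ^ 2)⁻¹ •
      ((Matrix.diagonal dw)⁻¹ + (Matrix.diagonal dv)⁻¹ + α⁻¹ • M⁻¹)⁻¹).PosDef := by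
  have hD : ((Matrix.diagonal dw)⁻¹ + (Matrix.diagonal dv)⁻¹).PosDef :=
    (PosDef.diagonal hdw).inv.add (PosDef.diagonal hdv).inv
  have hscaled_inv : α⁻¹ • M⁻¹ = (α • M)⁻¹ :=
    (inv_smul' M (Units.mk0 α hα.ne') ((isUnit_iff_isUnit_det M).mp hM.isUnit)).symm
  have hrescale : α⁻¹ • M = (α ^ 2)⁻¹ • (α • M) := by
    rw [smul_smul, sq, mul_inv, inv_mul_cancel_right₀ hα.ne']
  rw [hscaled_inv, hrescale, ← smul_sub]
  exact ((hM.smul hα).sub_inv_add_inv hD).smul (by positivity)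
end

section
/- Let M be a symmetric positive definite n×n real matrix, let L be any n×n real matrix, let α > 0, and let Θ_y, Θ_w, Θ_v be n×n diagonal matrices with strictly positive diagonal entries. Then the Schur complement S := L (M + Θ_y)⁻¹ Lᵀ + (1/α) M − (1/α²) (Θ_w⁻¹ + Θ_v⁻¹ + (1/α) M⁻¹)⁻¹ is symmetric positive definite; in particular it is the sum of the symmetric positive semidefinite matrix L (M + Θ_y)⁻¹ Lᵀ and the symmetric positive definite matrix (1/α) M − (1/α²) (Θ_w⁻¹ + Θ_v⁻¹ + (1/α) M⁻¹)⁻¹. -/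
/-!
For positive definite `A` and `B`, the Woodbury identity gives
`A - (B + A⁻¹)⁻¹ = A (B⁻¹ + A)⁻¹ A`, a congruence of a positive definite matrix, hence positive
definite. With `A = α M` and `B = Θ_w⁻¹ + Θ_v⁻¹`, the second summand of the Schur complement is
`α⁻²` times this matrix. The first summand is a congruence of the positive definite
`(M + Θ_y)⁻¹`, hence positive semidefinite.
-/

open Matrix

namespace Matrix

variable {n K : Type*} [Fintype n] [DecidableEq n]

theorem inv_add_inv_eq_sub [CommRing K] {A B : Matrix n n K} (hA : IsUnit A) (hB : IsUnit B)
    (hBA : IsUnit (B⁻¹ + A)) :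
    (B + A⁻¹)⁻¹ = A - A * (B⁻¹ + A)⁻¹ * A := by
  have hAA : A⁻¹⁻¹ = A := nonsing_inv_nonsing_inv A ((isUnit_iff_isUnit_det A).mp hA)
  simpa [add_comm, hAA] using
    add_mul_mul_inv_eq_sub A⁻¹ 1 B 1 (isUnit_nonsing_inv_iff.mpr hA) hB (by simpa [hAA] using hBA)

variable [Field K] [PartialOrder K] [StarRing K] [AddLeftMono K]

theorem PosDef.sub_inv_add_inv_s8 {A B : Matrix n n K} (hA : A.PosDef) (hB : B.PosDef) :
    (A - (B + A⁻¹)⁻¹).PosDef := by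
  have hBA : (B⁻¹ + A).PosDef := hB.inv.add hA
  rw [inv_add_inv_eq_sub hA.isUnit hB.isUnit hBA.isUnit, sub_sub_cancel]
  simpa [star_eq_conjTranspose, hA.isHermitian.eq] using
    (IsUnit.posDef_star_right_conjugate_iff (x := (B⁻¹ + A)⁻¹) hA.isUnit).mpr hBA.inv

end Matrix

/-- The Schur complement
`S = L (M + Θ_y)⁻¹ Lᵀ + (1/α) M - (1/α²) (Θ_w⁻¹ + Θ_v⁻¹ + (1/α) M⁻¹)⁻¹`
is symmetric positive definite: it is the sum of the symmetric positive semidefinite matrix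
`L (M + Θ_y)⁻¹ Lᵀ` and the symmetric positive definite matrix
`(1/α) M - (1/α²) (Θ_w⁻¹ + Θ_v⁻¹ + (1/α) M⁻¹)⁻¹`. -/
theorem schur_complement_posdef {n : ℕ}
    (M : Matrix (Fin n) (Fin n) ℝ) (hM : M.PosDef)
    (L : Matrix (Fin n) (Fin n) ℝ)
    (α : ℝ) (hα : 0 < α)
    (dy dw dv : Fin n → ℝ)
    (hdy : ∀ i, 0 < dy i) (hdw : ∀ i, 0 < dw i) (hdv : ∀ i, 0 < dv i) :
    (L * (M + Matrix.diagonal dy)⁻¹ * Lᵀ +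
      (α⁻¹ • M - (α ^ 2)⁻¹ •
        ((Matrix.diagonal dw)⁻¹ + (Matrix.diagonal dv)⁻¹ + α⁻¹ • M⁻¹)⁻¹)).PosDef ∧
    (L * (M + Matrix.diagonal dy)⁻¹ * Lᵀ).PosSemidef ∧
    (α⁻¹ • M - (α ^ 2)⁻¹ •
      ((Matrix.diagonal dw)⁻¹ + (Matrix.diagonal dv)⁻¹ + α⁻¹ • M⁻¹)⁻¹).PosDef := by
  have hMy : (M + diagonal dy).PosDef :=
    hM.add_posSemidef (.diagonal fun i => (hdy i).le)
  have hPSD : (L * (M + diagonal dy)⁻¹ * Lᵀ).PosSemidef := by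
    simpa [conjTranspose_eq_transpose_of_trivial] using
      hMy.inv.posSemidef.mul_mul_conjTranspose_same L
  have hB : ((diagonal dw)⁻¹ + (diagonal dv)⁻¹).PosDef :=
    (PosDef.diagonal hdw).inv.add (PosDef.diagonal hdv).inv
  have hαM : (α • M).PosDef := hM.smul hα
  have hinv : (α • M)⁻¹ = α⁻¹ • M⁻¹ := by
    refine inv_eq_left_inv ?_
    rw [smul_mul_smul_comm, inv_mul_cancel₀ hα.ne', one_smul,
      nonsing_inv_mul M ((isUnit_iff_isUnit_det M).mp hM.isUnit)]
  have hPD_eq : α⁻¹ • M - (α ^ 2)⁻¹ •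
      ((diagonal dw)⁻¹ + (diagonal dv)⁻¹ + α⁻¹ • M⁻¹)⁻¹ =
      (α ^ 2)⁻¹ • (α • M - ((diagonal dw)⁻¹ + (diagonal dv)⁻¹ + (α • M)⁻¹)⁻¹) := by
    rw [hinv, smul_sub, smul_smul]
    congr 2
    field_simp
  have hPD := hPD_eq ▸ (hαM.sub_inv_add_inv_s8 hB).smul (inv_pos.mpr (pow_pos hα 2))
  exact ⟨hPD.posSemidef_add hPSD, hPSD, hPD⟩
end

section
/- Let M, Θ_y, Θ_w, Θ_v be n×n diagonal real matrices with strictly positive diagonal entries (the lumped mass matrix case, D_M = M), let α > 0, and let L be any n×n real matrix. Define the Schur complement S := L (M + Θ_y)⁻¹ Lᵀ + (1/α) M − (1/α²) (Θ_w⁻¹ + Θ_v⁻¹ + (1/α) M⁻¹)⁻¹, the diagonal matrix M̂ := [(1/α) M − (1/α²) (Θ_w⁻¹ + Θ_v⁻¹ + (1/α) M⁻¹)⁻¹]^{1/2} (M + Θ_y)^{1/2} (square roots of diagonal positive definite matrices taken entrywise on the diagonal), and the approximation Ŝ := (L + M̂) (M + Θ_y)⁻¹ (L + M̂)ᵀ.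 If L + M̂ is invertible, then every eigenvalue λ of Ŝ⁻¹ S is real and satisfies λ ≥ 1/2. -/
open Matrix
open scoped ComplexOrder

/-!
With `D = M + Θ_y`, all matrices except `L` are diagonal, so `M̂ D⁻¹ M̂ = A`, and the
parallelogram identity gives `2 S = Ŝ + T` with `T = (L - M̂) D⁻¹ (L - M̂)ᵀ`. An eigenpair
`S v = μ Ŝ v` then yields `T v = (2μ - 1) Ŝ v`. Since `Ŝ` is positive definite and `T` positive
semidefinite, `2μ - 1 = v* T v / v* Ŝ v` is a nonnegative real number.
-/

noncomputable def lumpedSchurEntry (α m w v : ℝ) : ℝ :=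
  α⁻¹ * m - (α ^ 2)⁻¹ * (w⁻¹ + v⁻¹ + α⁻¹ * m⁻¹)⁻¹

lemma lumpedSchurEntry_pos {α m w v : ℝ} (hα : 0 < α) (hm : 0 < m) (hw : 0 < w) (hv : 0 < v) :
    0 < lumpedSchurEntry α m w v := by
  have hs : 0 < w⁻¹ + v⁻¹ := by positivity
  rw [lumpedSchurEntry, sub_pos]
  field_simp
  nlinarith [mul_pos (mul_pos hα hm) hs, mul_pos hα hm]

namespace Matrix

variable {n : Type*} [Fintype n]

lemma PosSemidef.nonneg_of_mulVec_eq_smul_mulVec {𝕜 : Type*} [RCLike 𝕜] {T B : Matrix n n 𝕜}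
    (hT : T.PosSemidef) (hB : B.PosDef) {c : 𝕜} {v : n → 𝕜} (hv : v ≠ 0)
    (h : T *ᵥ v = c • (B *ᵥ v)) : 0 ≤ c := by
  have hp := hB.dotProduct_mulVec_pos hv
  have hr := hT.dotProduct_mulVec_nonneg v
  rw [h, dotProduct_smul, smul_eq_mul] at hr
  simpa only [mul_div_cancel_right₀ _ hp.ne'] using div_nonneg hr hp.le

lemma half_le_re_of_two_smul_eq_add {S B T : Matrix n n ℂ} (hB : B.PosDef) (hT : T.PosSemidef)
    (hsum : 2 • S = B + T) {μ : ℂ} {v : n → ℂ} (hv : v ≠ 0) (h : S *ᵥ v = μ • (B *ᵥ v)) :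
    μ.im = 0 ∧ 1 / 2 ≤ μ.re := by
  have hTv : T *ᵥ v = (2 * μ - 1) • (B *ᵥ v) := by
    rw [eq_sub_of_add_eq' hsum.symm, sub_mulVec, smul_mulVec, h, sub_smul, one_smul, mul_smul]
    norm_cast
  obtain ⟨hre, him⟩ := Complex.le_def.1 (hT.nonneg_of_mulVec_eq_smul_mulVec hB hv hTv)
  simp only [Complex.zero_re, Complex.zero_im, Complex.sub_re, Complex.sub_im, Complex.mul_re,
    Complex.mul_im, Complex.one_re, Complex.one_im, Complex.re_ofNat, Complex.im_ofNat] at hre him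
  constructor <;> linarith

lemma add_mul_mul_transpose_add_sub_mul_mul_transpose_sub {R : Type*} [Ring R]
    (L M D : Matrix n n R) :
    (L + M) * D * (L + M)ᵀ + (L - M) * D * (L - M)ᵀ = 2 • (L * D * Lᵀ + M * D * Mᵀ) := by
  rw [transpose_add, transpose_sub, two_smul]
  noncomm_ring

lemma map_ofReal_mul_mul_transpose (B D : Matrix n n ℝ) :
    (B * D * Bᵀ).map Complex.ofReal
      = B.map Complex.ofReal * D.map Complex.ofReal * (B.map Complex.ofReal)ᴴ := by
  ext i j
  simp [mul_apply]

lemma posSemidef_map_ofReal_mul_mul_transpose (B : Matrix n n ℝ) {D : Matrix n n ℝ}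
    (hD : (D.map Complex.ofReal).PosSemidef) : ((B * D * Bᵀ).map Complex.ofReal).PosSemidef := by
  rw [map_ofReal_mul_mul_transpose]
  exact hD.mul_mul_conjTranspose_same _

variable [DecidableEq n]

lemma posDef_map_ofReal_mul_mul_transpose {B D : Matrix n n ℝ} (hB : IsUnit B)
    (hD : (D.map Complex.ofReal).PosDef) : ((B * D * Bᵀ).map Complex.ofReal).PosDef := by
  rw [map_ofReal_mul_mul_transpose, ← star_eq_conjTranspose]
  exact (hB.map Complex.ofRealHom.mapMatrix).posDef_star_right_conjugate_iff.2 hD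

omit [Fintype n] in
lemma posDef_map_ofReal_diagonal {d : n → ℝ} (hd : ∀ i, 0 < d i) :
    ((diagonal d).map Complex.ofReal).PosDef := by
  rw [diagonal_map Complex.ofReal_zero, posDef_diagonal_iff]
  exact fun i => Complex.zero_lt_real.2 (hd i)

lemma mulVec_map_eq_smul_mulVec_map {R K : Type*} [CommRing R] [CommRing K] (f : R →+* K)
    {B S : Matrix n n R} (hB : IsUnit B) {μ : K} {v : n → K}
    (h : (B⁻¹ * S).map f *ᵥ v = μ • v) : S.map f *ᵥ v = μ • (B.map f *ᵥ v) := by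
  rw [← mulVec_smul, ← h, mulVec_mulVec, ← Matrix.map_mul,
    mul_nonsing_inv_cancel_left _ _ ((isUnit_iff_isUnit_det B).1 hB)]

lemma inv_diagonal_of_ne_zero {K : Type*} [Field K] {u : n → K} (hu : ∀ i, u i ≠ 0) :
    (diagonal u)⁻¹ = diagonal u⁻¹ := by
  refine inv_eq_right_inv ?_
  rw [diagonal_mul_diagonal, ← diagonal_one]
  exact congrArg diagonal (funext fun i => mul_inv_cancel₀ (hu i))

lemma smul_diagonal_sub_smul_inv_eq_diagonal_lumpedSchurEntry {α : ℝ} (hα : 0 < α)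
    {m w v : n → ℝ} (hm : ∀ i, 0 < m i) (hw : ∀ i, 0 < w i) (hv : ∀ i, 0 < v i) :
    α⁻¹ • diagonal m - (α ^ 2)⁻¹ • ((diagonal w)⁻¹ + (diagonal v)⁻¹ + α⁻¹ • (diagonal m)⁻¹)⁻¹
      = diagonal fun i => lumpedSchurEntry α (m i) (w i) (v i) := by
  have hsum : ∀ i, w⁻¹ i + v⁻¹ i + (α⁻¹ • m⁻¹) i ≠ 0 := fun i => by
    have := hm i; have := hw i; have := hv i
    simp only [Pi.inv_apply, Pi.smul_apply, smul_eq_mul]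
    positivity
  simp only [inv_diagonal_of_ne_zero fun i => (hm i).ne', inv_diagonal_of_ne_zero fun i => (hw i).ne',
    inv_diagonal_of_ne_zero fun i => (hv i).ne', ← diagonal_smul, diagonal_add]
  rw [inv_diagonal_of_ne_zero hsum, ← diagonal_smul, diagonal_sub]
  rfl

lemma diagonal_sqrt_mul_sqrt_mul_inv_mul_self {a d : n → ℝ} (ha : ∀ i, 0 ≤ a i)
    (hd : ∀ i, 0 < d i) :
    diagonal (fun i => √(a i) * √(d i)) * diagonal d⁻¹ * diagonal (fun i => √(a i) * √(d i))
      = diagonal a := by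
  simp only [diagonal_mul_diagonal]
  refine congrArg diagonal (funext fun i => ?_)
  calc √(a i) * √(d i) * d⁻¹ i * (√(a i) * √(d i))
      = (√(a i) * √(a i)) * ((√(d i) * √(d i)) * (d i)⁻¹) := by rw [Pi.inv_apply]; ring
    _ = a i := by rw [Real.mul_self_sqrt (ha i), Real.mul_self_sqrt (hd i).le,
        mul_inv_cancel₀ (hd i).ne', mul_one]

end Matrix

/-- Lumped mass matrix case: with `M, Θ_y, Θ_w, Θ_v` diagonal positive definite,
`S = L (M + Θ_y)⁻¹ Lᵀ + (1/α) M - (1/α²) (Θ_w⁻¹ + Θ_v⁻¹ + (1/α) M⁻¹)⁻¹`,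
`M̂` the diagonal matrix with entries
`√(((1/α) M - (1/α²)(Θ_w⁻¹ + Θ_v⁻¹ + (1/α) M⁻¹)⁻¹)ᵢᵢ) · √((M + Θ_y)ᵢᵢ)`,
and `Ŝ = (L + M̂)(M + Θ_y)⁻¹(L + M̂)ᵀ` with `L + M̂` invertible,
every eigenvalue `μ` of `Ŝ⁻¹ S` is real and satisfies `μ ≥ 1/2`. -/
theorem lumped_preconditioned_schur_eig_half {n : ℕ}
    (m dy dw dv : Fin n → ℝ)
    (hm : ∀ i, 0 < m i) (hdy : ∀ i, 0 < dy i) (hdw : ∀ i, 0 < dw i) (hdv : ∀ i, 0 < dv i)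
    (α : ℝ) (hα : 0 < α)
    (L : Matrix (Fin n) (Fin n) ℝ)
    (A S Mhat Shat : Matrix (Fin n) (Fin n) ℝ)
    (hA : A = α⁻¹ • Matrix.diagonal m - (α ^ 2)⁻¹ •
      ((Matrix.diagonal dw)⁻¹ + (Matrix.diagonal dv)⁻¹ + α⁻¹ • (Matrix.diagonal m)⁻¹)⁻¹)
    (hS : S = L * (Matrix.diagonal m + Matrix.diagonal dy)⁻¹ * Lᵀ + A)
    (hMhat : Mhat = Matrix.diagonal (fun i =>
      Real.sqrt (A i i) * Real.sqrt ((Matrix.diagonal m + Matrix.diagonal dy) i i)))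
    (hShat : Shat = (L + Mhat) * (Matrix.diagonal m + Matrix.diagonal dy)⁻¹ * (L + Mhat)ᵀ)
    (hLM : IsUnit (L + Mhat))
    (μ : ℂ) (v : Fin n → ℂ) (hv : v ≠ 0)
    (heig : ((Shat⁻¹ * S).map Complex.ofReal) *ᵥ v = μ • v) :
    μ.im = 0 ∧ 1 / 2 ≤ μ.re := by
  set d : Fin n → ℝ := fun i => m i + dy i
  set a : Fin n → ℝ := fun i => lumpedSchurEntry α (m i) (dw i) (dv i)
  have hd : ∀ i, 0 < d i := fun i => add_pos (hm i) (hdy i)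
  have hA' : A = diagonal a :=
    hA.trans (smul_diagonal_sub_smul_inv_eq_diagonal_lumpedSchurEntry hα hm hdw hdv)
  have hD : diagonal m + diagonal dy = diagonal d := diagonal_add m dy
  have hDinv : (diagonal m + diagonal dy)⁻¹ = diagonal d⁻¹ := by
    rw [hD, inv_diagonal_of_ne_zero fun i => (hd i).ne']
  have hMhat' : Mhat = diagonal fun i => √(a i) * √(d i) := by
    rw [hMhat, hA', hD]
    simp
  have hsum : 2 • S = Shat + (L - Mhat) * diagonal d⁻¹ * (L - Mhat)ᵀ := by
    rw [hShat, hDinv, add_mul_mul_transpose_add_sub_mul_mul_transpose_sub, hS, hDinv, hA', hMhat',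
      diagonal_transpose, diagonal_sqrt_mul_sqrt_mul_inv_mul_self
        (fun i => (lumpedSchurEntry_pos hα (hm i) (hdw i) (hdv i)).le) hd]
  have hDinv_pd := posDef_map_ofReal_diagonal fun i => inv_pos.2 (hd i)
  have hShat_unit : IsUnit Shat := by
    have hDinv_unit : IsUnit (diagonal d⁻¹) :=
      isUnit_diagonal.2 (Pi.isUnit_iff.2 fun i => (inv_pos.2 (hd i)).ne'.isUnit)
    rw [hShat, hDinv]
    exact (hLM.mul hDinv_unit).mul ((isUnit_transpose _).2 hLM)
  have hShat_pd : (Shat.map Complex.ofReal).PosDef := by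
    rw [hShat, hDinv]
    exact posDef_map_ofReal_mul_mul_transpose hLM hDinv_pd
  have hsumC : 2 • S.map Complex.ofReal = Shat.map Complex.ofReal
      + ((L - Mhat) * diagonal d⁻¹ * (L - Mhat)ᵀ).map Complex.ofReal := by
    rw [← Matrix.map_add _ Complex.ofReal_add, ← hsum, two_smul, two_smul,
      Matrix.map_add _ Complex.ofReal_add]
  exact half_le_re_of_two_smul_eq_add hShat_pd
    (posSemidef_map_ofReal_mul_mul_transpose (L - Mhat) hDinv_pd.posSemidef) hsumC hv
    (mulVec_map_eq_smul_mulVec_map Complex.ofRealHom hShat_unit heig)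
end

section
/- Let χ, ω, γ be vectors in ℝⁿ with γ ≠ 0. Then χᵀχ + ωᵀω ≥ (1/2) · min{(ωᵀω)/(γᵀγ), 1} · (χ + γ)ᵀ(χ + γ). -/
open Matrix

/-- For vectors `χ, ω, γ ∈ ℝⁿ` with `γ ≠ 0`:
`χᵀχ + ωᵀω ≥ (1/2) · min{(ωᵀω)/(γᵀγ), 1} · (χ + γ)ᵀ(χ + γ)`. -/
theorem rayleigh_half_min_bound {n : ℕ}
    (χ ω γ : Fin n → ℝ) (hγ : γ ≠ 0) :
    χ ⬝ᵥ χ + ω ⬝ᵥ ω ≥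
      1 / 2 * min ((ω ⬝ᵥ ω) / (γ ⬝ᵥ γ)) 1 * ((χ + γ) ⬝ᵥ (χ + γ)) := by
  have hnn : ∀ v : Fin n → ℝ, (0:ℝ) ≤ v ⬝ᵥ v := fun v =>
    Finset.sum_nonneg fun i _ => mul_self_nonneg _
  have hg : (0:ℝ) < γ ⬝ᵥ γ := by
    rcases lt_or_eq_of_le (hnn γ) with h | h
    · exact h
    · exact absurd ((dotProduct_self_eq_zero).mp h.symm) hγ
  have ha : (0:ℝ) ≤ χ ⬝ᵥ χ := hnn χ
  have hb : (0:ℝ) ≤ ω ⬝ᵥ ω := hnn ω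
  have hsub : (0:ℝ) ≤ (χ - γ) ⬝ᵥ (χ - γ) := hnn _
  have hexp : (χ + γ) ⬝ᵥ (χ + γ) = χ ⬝ᵥ χ + 2 * (χ ⬝ᵥ γ) + γ ⬝ᵥ γ := by
    simp [add_dotProduct, dotProduct_add, dotProduct_comm γ χ]; ring
  have hexp2 : (χ - γ) ⬝ᵥ (χ - γ) = χ ⬝ᵥ χ - 2 * (χ ⬝ᵥ γ) + γ ⬝ᵥ γ := by
    simp [sub_dotProduct, dotProduct_sub, dotProduct_comm γ χ]; ring
  rcases min_cases ((ω ⬝ᵥ ω) / (γ ⬝ᵥ γ)) 1 with ⟨hm, hle⟩ | ⟨hm, hle⟩ <;> rw [hm]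
  · have hdiv : (ω ⬝ᵥ ω) / (γ ⬝ᵥ γ) * (γ ⬝ᵥ γ) = ω ⬝ᵥ ω := div_mul_cancel₀ _ hg.ne'
    have hd0 : 0 ≤ (ω ⬝ᵥ ω) / (γ ⬝ᵥ γ) := div_nonneg hb hg.le
    nlinarith [mul_nonneg hd0 (show (0:ℝ) ≤ 2*(χ ⬝ᵥ χ)+2*(γ ⬝ᵥ γ) - (χ+γ) ⬝ᵥ (χ+γ) by
      nlinarith), mul_le_of_le_one_left ha hle]
  · have : (ω ⬝ᵥ ω) / (γ ⬝ᵥ γ) ≥ 1 := le_of_lt (by linarith) |>.trans_eq rfl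
    have hge : γ ⬝ᵥ γ ≤ ω ⬝ᵥ ω := by
      have := (one_le_div hg).mp this
      linarith
    nlinarith
end

section
/- Let A be a symmetric positive definite n×n real matrix and B an m×n real matrix of full row rank m (m ≤ n), and set S := B A⁻¹ Bᵀ (which is symmetric positive definite). Let 𝒜 := [[A, Bᵀ], [B, 0]] be the saddle-point matrix and P₁ := [[A, 0], [0, S]] the block diagonal ideal preconditioner. Then every eigenvalue λ of P₁⁻¹ 𝒜 is real and belongs to the set {1, (1 + √5)/2, (1 − √5)/2}. -/
/-!
Full row rank makes `Bᵀ` injective, so `S = B A⁻¹ Bᵀ` is positive definite and invertible.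
Since `P₁⁻¹ 𝒜 = [[1, A⁻¹Bᵀ], [S⁻¹B, 0]]` and `(S⁻¹B)(A⁻¹Bᵀ) = S⁻¹S = 1`, a block computation
shows that `N := P₁⁻¹ 𝒜` satisfies `(N - 1)(N² - N - 1) = 0`. Every eigenvalue of `N` is then a
root of `(x - 1)(x² - x - 1)`, namely `1` or the golden ratio or its conjugate.
-/

open Matrix

namespace Matrix

variable {ι m n : Type*} [Fintype m] [Fintype n]

theorem linearIndependent_row_of_rank_eq_card {K : Type*} [Field K] {B : Matrix m n K}
    (hB : B.rank = Fintype.card m) : LinearIndependent K B.row := by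
  rw [linearIndependent_iff_card_eq_finrank_span, Set.finrank, ← rank_eq_finrank_span_row, hB]

theorem PosDef.mul_mul_conjTranspose_of_rank_eq_card {K : Type*} [Field K] [PartialOrder K]
    [StarRing K] {A : Matrix n n K} (hA : A.PosDef) {B : Matrix m n K}
    (hB : B.rank = Fintype.card m) : (B * A * Bᴴ).PosDef :=
  hA.mul_mul_conjTranspose_same <| vecMul_injective_iff.mpr <|
    linearIndependent_row_of_rank_eq_card hB

variable [DecidableEq m] [DecidableEq n]

theorem inv_fromBlocks_zero_zero_mul_fromBlocks {R : Type*} [CommRing R] {A : Matrix n n R}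
    {S : Matrix m m R} (hA : IsUnit A) (hS : IsUnit S) (E : Matrix n m R)
    (B : Matrix m n R) :
    (fromBlocks A 0 0 S)⁻¹ * fromBlocks A E B 0 = fromBlocks 1 (A⁻¹ * E) (S⁻¹ * B) 0 := by
  rw [inv_fromBlocks_zero₂₁_of_isUnit_iff _ _ _ (iff_of_true hA hS)]
  simp [fromBlocks_multiply, nonsing_inv_mul _ ((isUnit_iff_isUnit_det A).mp hA)]

theorem fromBlocks_one_zero_cubic_eq_zero {R : Type*} [Ring R] {C : Matrix n m R} {D : Matrix m n R}
    (hDC : D * C = 1) :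
    (fromBlocks 1 C D 0 - 1) * (fromBlocks 1 C D 0 ^ 2 - fromBlocks 1 C D 0 - 1) = 0 := by
  have hsub : fromBlocks 1 C D 0 - 1 = fromBlocks 0 C D (-1) := by
    rw [← fromBlocks_one, sub_eq_add_neg, fromBlocks_neg, fromBlocks_add]
    simp
  have hquad : fromBlocks 1 C D 0 ^ 2 - fromBlocks 1 C D 0 - 1 = fromBlocks (C * D - 1) 0 0 0 := by
    rw [← fromBlocks_one, sq, fromBlocks_multiply, sub_sub, fromBlocks_add, sub_eq_add_neg,
      fromBlocks_neg, fromBlocks_add]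
    simp only [Matrix.mul_one, Matrix.one_mul, Matrix.mul_zero, Matrix.zero_mul, hDC, add_zero,
      add_neg_cancel]
    abel_nf
  have hD : D * (C * D - 1) = 0 := by
    rw [Matrix.mul_sub, ← Matrix.mul_assoc, hDC, Matrix.one_mul, Matrix.mul_one, sub_self]
  rw [hsub, hquad, fromBlocks_multiply]
  simp [hD]

theorem eval_eq_zero_of_aeval_eq_zero_of_mulVec_eq_smul {K : Type*} [Field K] [Fintype ι]
    [DecidableEq ι] {M : Matrix ι ι K} {p : Polynomial K} (hp : Polynomial.aeval M p = 0)
    {μ : K} {v : ι → K} (hv : v ≠ 0) (hMv : M *ᵥ v = μ • v) : p.eval μ = 0 := by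
  have h := Module.End.aeval_apply_of_mem_apply_eq_smul (p := p)
    ((toLinAlgEquiv'_apply M v).trans hMv)
  rw [Polynomial.aeval_algHom_apply toLinAlgEquiv' M p, hp, map_zero] at h
  exact (smul_eq_zero.mp h.symm).resolve_right hv

end Matrix

open Real goldenRatio in
theorem Complex.eq_one_or_goldenRatio_or_goldenConj {z : ℂ} (hz : (z - 1) * (z ^ 2 - z - 1) = 0) :
    z = 1 ∨ z = φ ∨ z = ψ := by
  have hfac : z ^ 2 - z - 1 = (z - φ) * (z - ψ) := by
    have hsum : (φ : ℂ) + ψ = 1 := by exact_mod_cast goldenRatio_add_goldenConj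
    have hprod : (φ : ℂ) * ψ = -1 := by exact_mod_cast goldenRatio_mul_goldenConj
    linear_combination z * hsum - hprod
  simpa [hfac, sub_eq_zero] using hz

/-- Ideal block diagonal preconditioning of a saddle-point matrix: with `A` symmetric
positive definite, `B` of full row rank, `S = B A⁻¹ Bᵀ`, `𝒜 = [[A, Bᵀ], [B, 0]]` and
`P₁ = [[A, 0], [0, S]]`, every eigenvalue of `P₁⁻¹ 𝒜` is real and belongs to
`{1, (1 + √5)/2, (1 - √5)/2}`. -/
theorem ideal_block_diag_precond_eigs {n m : ℕ}
    (A : Matrix (Fin n) (Fin n) ℝ) (hA : A.PosDef)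
    (B : Matrix (Fin m) (Fin n) ℝ) (hB : B.rank = m)
    (μ : ℂ) (v : (Fin n ⊕ Fin m) → ℂ) (hv : v ≠ 0)
    (heig : (((Matrix.fromBlocks A 0 0 (B * A⁻¹ * Bᵀ))⁻¹ *
        Matrix.fromBlocks A Bᵀ B 0).map Complex.ofReal) *ᵥ v = μ • v) :
    μ = 1 ∨ μ = (((1 + Real.sqrt 5) / 2 : ℝ) : ℂ) ∨
      μ = (((1 - Real.sqrt 5) / 2 : ℝ) : ℂ) := by
  set S := B * A⁻¹ * Bᵀ
  have hS : S.PosDef := by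
    simpa [conjTranspose_eq_transpose_of_trivial] using
      hA.inv.mul_mul_conjTranspose_of_rank_eq_card (hB.trans (Fintype.card_fin m).symm)
  have hSchur : (S⁻¹ * B) * (A⁻¹ * Bᵀ) = 1 := by
    rw [Matrix.mul_assoc, ← Matrix.mul_assoc B,
      nonsing_inv_mul _ ((isUnit_iff_isUnit_det S).mp hS.isUnit)]
  rw [inv_fromBlocks_zero_zero_mul_fromBlocks hA.isUnit hS.isUnit,
    fromBlocks_map, Matrix.map_one _ Complex.ofReal_zero Complex.ofReal_one,
    Matrix.map_zero _ Complex.ofReal_zero] at heig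
  have hSchurC : (S⁻¹ * B).map Complex.ofReal * (A⁻¹ * Bᵀ).map Complex.ofReal = 1 := by
    have := (Matrix.map_mul (L := S⁻¹ * B) (M := A⁻¹ * Bᵀ) (f := Complex.ofRealHom)).symm
    rwa [hSchur, Matrix.map_one _ (map_zero _) (map_one _)] at this
  have hcubic := fromBlocks_one_zero_cubic_eq_zero hSchurC
  have hroot := eval_eq_zero_of_aeval_eq_zero_of_mulVec_eq_smul
    (p := (Polynomial.X - 1) * (Polynomial.X ^ 2 - Polynomial.X - 1)) (by simpa using hcubic) hv heig
  exact Complex.eq_one_or_goldenRatio_or_goldenConj (by simpa using hroot)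
end

section
/- Let A be a symmetric positive definite n×n real matrix and B an m×n real matrix of full row rank m (m ≤ n), and set S := B A⁻¹ Bᵀ. Let 𝒜 := [[A, Bᵀ], [B, 0]] be the saddle-point matrix and P₂ := [[A, 0], [B, −S]] the block triangular ideal preconditioner. Then every eigenvalue of P₂⁻¹ 𝒜 equals 1. -/
/-!
Since `S = B A⁻¹ Bᵀ`, one has `P₂ · [[I, A⁻¹Bᵀ], [0, I]] = 𝒜`, so `P₂⁻¹ 𝒜 = [[I, A⁻¹Bᵀ], [0, I]]`
is unipotent and all its eigenvalues are `1`. Invertibility of `P₂` reduces to that of `A` and `S`,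
and full row rank of `B` makes `S` positive definite.
-/

open Matrix

namespace Matrix

variable {m n ι K R : Type*} [Fintype m] [Fintype n] [Fintype ι] [DecidableEq ι]

theorem vecMul_injective_of_rank_eq_card [Field K] {B : Matrix m n K}
    (hB : B.rank = Fintype.card m) : Function.Injective B.vecMul := by
  rw [vecMul_injective_iff, linearIndependent_iff_card_eq_finrank_span, ← hB,
    rank_eq_finrank_span_row]
  rfl

theorem eq_zero_of_isNilpotent_of_mulVec_eq_smul [Field K] {N : Matrix ι ι K}
    (hN : IsNilpotent N) {v : ι → K} (hv : v ≠ 0) {μ : K} (h : N *ᵥ v = μ • v) : μ = 0 := by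
  have hμ : Module.End.HasEigenvalue (toLin' N) μ :=
    Module.End.hasEigenvalue_of_hasEigenvector
      ⟨Module.End.mem_eigenspace_iff.mpr (by rwa [toLin'_apply]), hv⟩
  exact (hμ.isNilpotent_of_isNilpotent (hN.map toLinAlgEquiv')).eq_zero

theorem eq_one_of_isNilpotent_sub_one_of_mulVec_eq_smul [Field K] {M : Matrix ι ι K}
    (hM : IsNilpotent (M - 1)) {v : ι → K} (hv : v ≠ 0) {μ : K} (h : M *ᵥ v = μ • v) :
    μ = 1 := by
  refine sub_eq_zero.mp (eq_zero_of_isNilpotent_of_mulVec_eq_smul hM hv ?_)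
  rw [sub_mulVec, h, one_mulVec, sub_smul, one_smul]

theorem isNilpotent_fromBlocks_one_sub_one [DecidableEq m] [DecidableEq n] [Ring R]
    (C : Matrix n m R) : IsNilpotent (fromBlocks 1 C 0 1 - 1 : Matrix (n ⊕ m) (n ⊕ m) R) := by
  refine ⟨2, ?_⟩
  rw [← fromBlocks_one (l := n) (m := m), sub_eq_add_neg, fromBlocks_neg, fromBlocks_add, pow_two,
    fromBlocks_multiply]
  simp

theorem fromBlocks_schur_mul_fromBlocks_one [DecidableEq m] [DecidableEq n] [CommRing R]
    {A : Matrix n n R} (hA : IsUnit A.det) (B : Matrix m n R) (C : Matrix n m R) :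
    fromBlocks A 0 B (-(B * A⁻¹ * C)) * fromBlocks 1 (A⁻¹ * C) 0 1 = fromBlocks A C B 0 := by
  rw [fromBlocks_multiply]
  simp only [Matrix.mul_one, Matrix.mul_zero, add_zero, ← Matrix.mul_assoc,
    mul_nonsing_inv A hA, Matrix.one_mul, add_neg_cancel]

theorem inv_fromBlocks_schur_mul_fromBlocks [DecidableEq m] [DecidableEq n] [CommRing R]
    {A : Matrix n n R} (hA : IsUnit A.det) (B : Matrix m n R) (C : Matrix n m R)
    (hS : IsUnit (B * A⁻¹ * C).det) :
    (fromBlocks A 0 B (-(B * A⁻¹ * C)))⁻¹ * fromBlocks A C B 0 = fromBlocks 1 (A⁻¹ * C) 0 1 := by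
  have hP : IsUnit (fromBlocks A 0 B (-(B * A⁻¹ * C))).det := by
    rw [det_fromBlocks_zero₁₂]
    exact hA.mul ((isUnit_iff_isUnit_det _).mp ((isUnit_iff_isUnit_det _).mpr hS).neg)
  rw [← fromBlocks_schur_mul_fromBlocks_one hA, ← Matrix.mul_assoc, nonsing_inv_mul _ hP,
    Matrix.one_mul]

end Matrix

/-- Ideal block triangular preconditioning of a saddle-point matrix: with `A` symmetric
positive definite, `B` of full row rank, `S = B A⁻¹ Bᵀ`, `𝒜 = [[A, Bᵀ], [B, 0]]` and
`P₂ = [[A, 0], [B, -S]]`, every eigenvalue of `P₂⁻¹ 𝒜` equals `1`. -/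
theorem ideal_block_triangular_precond_eigs {n m : ℕ}
    (A : Matrix (Fin n) (Fin n) ℝ) (hA : A.PosDef)
    (B : Matrix (Fin m) (Fin n) ℝ) (hB : B.rank = m)
    (μ : ℂ) (v : (Fin n ⊕ Fin m) → ℂ) (hv : v ≠ 0)
    (heig : (((Matrix.fromBlocks A 0 B (-(B * A⁻¹ * Bᵀ)))⁻¹ *
        Matrix.fromBlocks A Bᵀ B 0).map Complex.ofReal) *ᵥ v = μ • v) :
    μ = 1 := by
  have hBinj : Function.Injective B.vecMul :=
    vecMul_injective_of_rank_eq_card (by rw [hB, Fintype.card_fin])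
  have hS : (B * A⁻¹ * Bᵀ).PosDef := by
    simpa only [conjTranspose_eq_transpose_of_trivial] using
      hA.inv.mul_mul_conjTranspose_same hBinj
  rw [inv_fromBlocks_schur_mul_fromBlocks hA.det_pos.ne'.isUnit B Bᵀ hS.det_pos.ne'.isUnit,
    fromBlocks_map] at heig
  simp only [Matrix.map_one, Complex.ofReal_zero, Complex.ofReal_one, Matrix.map_zero] at heig
  exact eq_one_of_isNilpotent_sub_one_of_mulVec_eq_smul (isNilpotent_fromBlocks_one_sub_one _) hv
    heig
end

section
/- Let M be a symmetric positive definite n×n real matrix, let L be an n×n real matrix with L + Lᵀ positive semidefinite, and let α > 0. Then the matrix L + (1/√α) M is invertible, and every eigenvalue λ of the matrix [(L + (1/√α) M) M⁻¹ (L + (1/√α) M)ᵀ]⁻¹ [L M⁻¹ Lᵀ + (1/α) M] is real and satisfies 1/2 ≤ λ ≤ 1. -/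
/-! Write `c = 1/√α`, `K = L + Lᵀ` and `S = L M⁻¹ Lᵀ + c² M`. Since `M` is symmetric,
expanding gives `(L + cM) M⁻¹ (L + cM)ᵀ = S + cK` and `(L - cM) M⁻¹ (L - cM)ᵀ = S - cK`; both
are congruences of `M⁻¹ > 0`, so with `P = S + cK` we get `½ P ≤ S ≤ P` in the Loewner order.
An eigenvector `v` of `P⁻¹ S` for `μ` satisfies `v* S v = μ · v* P v` with `v* P v > 0` and
`v* S v` real, which forces `μ` real and in `[½, 1]`. Invertibility of `L + cM` comes from
`vᵀ (L + cM) v = ½ vᵀ K v + c vᵀ M v`. -/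

open Matrix

open scoped ComplexOrder

namespace Matrix

variable {n : Type*} [Fintype n]

theorem PosDef.isUnit_add_of_posSemidef_add_transpose [DecidableEq n] {R : Type*} [Field R]
    [LinearOrder R] [IsStrictOrderedRing R] [StarRing R] [TrivialStar R] {M L : Matrix n n R}
    (hM : M.PosDef) (hL : (L + Lᵀ).PosSemidef) : IsUnit (L + M) := by
  rw [isUnit_iff_isUnit_det, isUnit_iff_ne_zero]
  intro hdet
  obtain ⟨v, hv, hLMv⟩ := exists_mulVec_eq_zero_iff.mpr hdet
  have hsum : v ⬝ᵥ (L *ᵥ v) + v ⬝ᵥ (M *ᵥ v) = 0 := by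
    rw [← dotProduct_add, ← add_mulVec, hLMv, dotProduct_zero]
  have hsymm : v ⬝ᵥ ((L + Lᵀ) *ᵥ v) = 2 * v ⬝ᵥ (L *ᵥ v) := by
    rw [add_mulVec, dotProduct_add, dotProduct_mulVec v Lᵀ, vecMul_transpose,
      dotProduct_comm (L *ᵥ v), two_mul]
  have hLL := hL.dotProduct_mulVec_nonneg v
  have hMM := hM.dotProduct_mulVec_pos hv
  simp only [star_trivial] at hLL hMM
  linarith

theorem add_smul_mul_inv_mul_transpose_add_smul [DecidableEq n] {R : Type*} [CommRing R]
    {M : Matrix n n R} (hM : IsUnit M.det) (hMt : Mᵀ = M) (L : Matrix n n R) (c : R) :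
    (L + c • M) * M⁻¹ * (L + c • M)ᵀ = L * M⁻¹ * Lᵀ + (c * c) • M + c • (L + Lᵀ) := by
  rw [transpose_add, transpose_smul, hMt]
  simp only [add_mul, mul_add, Matrix.smul_mul, Matrix.mul_smul, smul_smul, Matrix.mul_assoc,
    nonsing_inv_mul _ hM, Matrix.mul_one, mul_nonsing_inv_cancel_left _ _ hM, smul_add]
  abel

theorem PosSemidef.map_ofReal {Q : Matrix n n ℝ} (hQ : Q.PosSemidef) :
    (Q.map Complex.ofReal).PosSemidef := by
  classical
  obtain ⟨B, rfl⟩ : ∃ B : Matrix n n ℝ, Q = Bᴴ * B := by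
    open scoped MatrixOrder Matrix.Norms.L2Operator in
    exact CStarAlgebra.nonneg_iff_eq_star_mul_self.mp (nonneg_iff_posSemidef.mpr hQ)
  change ((Bᴴ * B).map Complex.ofRealHom).PosSemidef
  rw [Matrix.map_mul,
    conjTranspose_map (⇑Complex.ofRealHom) fun _ ↦ (Complex.conj_ofReal _).symm]
  exact posSemidef_conjTranspose_mul_self _

theorem PosDef.map_ofReal [DecidableEq n] {Q : Matrix n n ℝ} (hQ : Q.PosDef) :
    (Q.map Complex.ofReal).PosDef := by
  rw [hQ.posSemidef.map_ofReal.posDef_iff_det_ne_zero]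
  change (Complex.ofRealHom.mapMatrix Q).det ≠ 0
  rw [← RingHom.map_det]
  exact Complex.ofReal_ne_zero.mpr hQ.det_pos.ne'

section RCLike

variable {𝕜 : Type*} [RCLike 𝕜]

theorem PosSemidef.re_dotProduct_le_and_im_dotProduct_eq_of_sub {A B : Matrix n n 𝕜}
    (h : (A - B).PosSemidef) (v : n → 𝕜) :
    RCLike.re (star v ⬝ᵥ (B *ᵥ v)) ≤ RCLike.re (star v ⬝ᵥ (A *ᵥ v)) ∧
      RCLike.im (star v ⬝ᵥ (A *ᵥ v)) = RCLike.im (star v ⬝ᵥ (B *ᵥ v)) := by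
  have := RCLike.nonneg_iff.mp (h.dotProduct_mulVec_nonneg v)
  simpa only [sub_mulVec, dotProduct_sub, map_sub, sub_nonneg, sub_eq_zero] using this

theorem PosDef.im_eq_zero_and_re_mem_Icc_of_mulVec_eq_smul_mulVec {P S : Matrix n n 𝕜}
    (hP : P.PosDef) {a b : ℝ} (ha : (S - a • P).PosSemidef) (hb : (b • P - S).PosSemidef)
    {μ : 𝕜} {v : n → 𝕜} (hv : v ≠ 0) (h : S *ᵥ v = μ • (P *ᵥ v)) :
    RCLike.im μ = 0 ∧ RCLike.re μ ∈ Set.Icc a b := by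
  have hp_pos := hP.re_dotProduct_pos hv
  have hp_im := hP.isHermitian.im_star_dotProduct_mulVec_self v
  obtain ⟨hle, him⟩ := ha.re_dotProduct_le_and_im_dotProduct_eq_of_sub v
  obtain ⟨hge, -⟩ := hb.re_dotProduct_le_and_im_dotProduct_eq_of_sub v
  simp only [h, smul_mulVec, dotProduct_smul, smul_eq_mul, RCLike.smul_re, RCLike.smul_im,
    RCLike.mul_re, RCLike.mul_im, hp_im, mul_zero, sub_zero, zero_add] at hle him hge
  exact ⟨(mul_eq_zero.mp him).resolve_right hp_pos.ne', le_of_mul_le_mul_right hle hp_pos,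
    le_of_mul_le_mul_right hge hp_pos⟩

end RCLike

theorem PosDef.im_eq_zero_and_re_mem_Icc_of_map_ofReal [DecidableEq n] {P S : Matrix n n ℝ}
    (hP : P.PosDef) {a b : ℝ} (ha : (S - a • P).PosSemidef) (hb : (b • P - S).PosSemidef)
    {μ : ℂ} {v : n → ℂ} (hv : v ≠ 0) (h : (P⁻¹ * S).map Complex.ofReal *ᵥ v = μ • v) :
    μ.im = 0 ∧ μ.re ∈ Set.Icc a b := by
  let f : Matrix n n ℝ →+* Matrix n n ℂ := Complex.ofRealHom.mapMatrix
  have f_smul (c : ℝ) (A : Matrix n n ℝ) : f (c • A) = c • f A :=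
    Matrix.map_smul _ c (fun x ↦ by simp [Complex.real_smul]) A
  change f (P⁻¹ * S) *ᵥ v = μ • v at h
  have heig : f S *ᵥ v = μ • (f P *ᵥ v) := by
    rw [← mul_nonsing_inv_cancel_left P S ((isUnit_iff_isUnit_det P).mp hP.isUnit), map_mul,
      ← mulVec_mulVec, h, mulVec_smul]
  have ha' : (f S - a • f P).PosSemidef := by
    rw [← f_smul, ← map_sub]
    exact ha.map_ofReal
  have hb' : (b • f P - f S).PosSemidef := by
    rw [← f_smul, ← map_sub]
    exact hb.map_ofReal
  exact hP.map_ofReal.im_eq_zero_and_re_mem_Icc_of_mulVec_eq_smul_mulVec ha' hb' hv heig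

end Matrix

/-- Matching-strategy eigenvalue bound: if `M` is symmetric positive definite,
`L + Lᵀ` is positive semidefinite and `α > 0`, then `L + (1/√α) M` is invertible and
every eigenvalue `μ` of `[(L + (1/√α)M) M⁻¹ (L + (1/√α)M)ᵀ]⁻¹ [L M⁻¹ Lᵀ + (1/α) M]`
is real with `1/2 ≤ μ ≤ 1`. -/
theorem matching_schur_eig_bounds {n : ℕ}
    (M L : Matrix (Fin n) (Fin n) ℝ) (hM : M.PosDef)
    (hL : (L + Lᵀ).PosSemidef)
    (α : ℝ) (hα : 0 < α) :
    IsUnit (L + (Real.sqrt α)⁻¹ • M) ∧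
      ∀ (μ : ℂ) (v : Fin n → ℂ), v ≠ 0 →
        ((((L + (Real.sqrt α)⁻¹ • M) * M⁻¹ * (L + (Real.sqrt α)⁻¹ • M)ᵀ)⁻¹ *
          (L * M⁻¹ * Lᵀ + α⁻¹ • M)).map Complex.ofReal) *ᵥ v = μ • v →
        μ.im = 0 ∧ 1 / 2 ≤ μ.re ∧ μ.re ≤ 1 := by
  set c := (Real.sqrt α)⁻¹
  have hc : 0 < c := inv_pos.mpr (Real.sqrt_pos.mpr hα)
  have hcc : c * c = α⁻¹ := by rw [← mul_inv, Real.mul_self_sqrt hα.le]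
  have hMt : Mᵀ = M := by simpa using hM.isHermitian.eq
  have hMdet : IsUnit M.det := (isUnit_iff_isUnit_det M).mp hM.isUnit
  have hB : IsUnit (L + c • M) := (hM.smul hc).isUnit_add_of_posSemidef_add_transpose hL
  refine ⟨hB, fun μ v hv heig ↦ ?_⟩
  set S := L * M⁻¹ * Lᵀ + α⁻¹ • M
  have hP : (L + c • M) * M⁻¹ * (L + c • M)ᵀ = S + c • (L + Lᵀ) := by
    rw [add_smul_mul_inv_mul_transpose_add_smul hMdet hMt, hcc]
  have hQ : (L + (-c) • M) * M⁻¹ * (L + (-c) • M)ᵀ = S - c • (L + Lᵀ) := by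
    rw [add_smul_mul_inv_mul_transpose_add_smul hMdet hMt, neg_mul_neg, hcc, neg_smul,
      ← sub_eq_add_neg]
  have hPpd : ((L + c • M) * M⁻¹ * (L + c • M)ᵀ).PosDef := by
    simpa using hM.inv.mul_mul_conjTranspose_same (vecMul_injective_of_isUnit hB)
  refine hPpd.im_eq_zero_and_re_mem_Icc_of_map_ofReal (a := 1 / 2) (b := 1) ?_ ?_ hv heig
  · rw [hP, show S - (1 / 2 : ℝ) • (S + c • (L + Lᵀ)) = (1 / 2 : ℝ) • (S - c • (L + Lᵀ)) by
      module, ← hQ]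
    simpa using (hM.inv.posSemidef.mul_mul_conjTranspose_same (L + (-c) • M)).smul
      (by norm_num : (0 : ℝ) ≤ 1 / 2)
  · rw [hP, one_smul, add_sub_cancel_left]
    exact hL.smul hc.le
end
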